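/- Every holomorphic function f : ℂ → ℂ satisfying f(z + 2π) = f(z) for all z, and square integrable against e^{-|z|²} dz, admits an expansion f(z) = Σ_{n∈ℤ} c_n e^{inz} converging locally uniformly on ℂ. -/

import Mathlib

open MeasureTheory Complex Real Filter

/-!
Shifting the contour of `∫₀^{2π} e^{-inx} f(x) dx` to the line `Im z = y` (the integrand is entire
and `2π`-periodic, so the vertical sides of the rectangle cancel) shows that the Fourier
coefficients of `x ↦ f(x + iy)` are `e^{-ny} c_n`, where `c_n` are those of `f` on the real line.
They are bounded by `sup |f|` on that line, so taking `y = ∓R` gives `|c_n| ≤ C_R e^{-|n|R}` for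
every `R`. Hence the Fourier series of every line function converges absolutely and therefore sums
to it, which is `f(z) = ∑ c_n e^{inz}`; the Weierstrass M-test makes the convergence uniform on
every horizontal strip.
-/

theorem Function.Periodic.intervalIntegral_add_mul_I_eq {h : ℂ → ℂ} {T : ℝ}
    (hh : Differentiable ℂ h) (hper : Function.Periodic h T) (y : ℝ) :
    ∫ x in (0:ℝ)..T, h (x + y * I) = ∫ x in (0:ℝ)..T, h x := by
  have hrect := integral_boundary_rect_eq_zero_of_differentiableOn h 0 (T + y * I)
    hh.differentiableOn
  have hsides : ∫ s in (0:ℝ)..y, h (T + s * I) = ∫ s in (0:ℝ)..y, h (s * I) :=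
    intervalIntegral.integral_congr fun s _ => by rw [add_comm]; exact hper _
  simp only [zero_re, zero_im, add_re, add_im, ofReal_re, ofReal_im, mul_re, mul_im, I_re, I_im,
    ofReal_zero, zero_mul, add_zero, mul_zero, mul_one, zero_add, hsides, sub_self] at hrect
  linear_combination -hrect

theorem Function.Periodic.hasSum_fourierCoeff_lift {T : ℝ} [Fact (0 < T)] {g : ℝ → ℂ}
    (hper : Function.Periodic g T) (hg : Continuous g) (hsum : Summable (fourierCoeff hper.lift))
    (x : ℝ) : HasSum (fun n => fourierCoeff hper.lift n * fourier n (x : AddCircle T)) (g x) := by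
  let G : C(AddCircle T, ℂ) := ⟨hper.lift, continuous_coinduced_dom.mpr hg⟩
  simpa [G] using has_pointwise_sum_fourier_series_of_summable (f := G) hsum x

lemma Real.summable_exp_neg_abs_int : Summable fun n : ℤ => rexp (-|(n : ℝ)|) := by
  apply Summable.of_nat_of_neg <;> simpa using Real.summable_exp_neg_nat

lemma fourier_coe_two_pi (n : ℤ) (x : ℝ) :
    fourier n (x : AddCircle (2 * π)) = cexp (I * n * x) := by
  rw [fourier_coe_apply]
  congr 1
  field_simp
  push_cast
  ring

noncomputable def lineFourierCoeff (f : ℂ → ℂ) (y : ℝ) (n : ℤ) : ℂ :=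
  (2 * π)⁻¹ * ∫ x in (0:ℝ)..2 * π, cexp (-(I * n * x)) * f (x + y * I)

section

variable {f : ℂ → ℂ}

theorem hasSum_lineFourierCoeff (hf : Continuous f)
    (hper : Function.Periodic f (2 * π)) {y : ℝ} (hsum : Summable (lineFourierCoeff f y))
    (x : ℝ) : HasSum (fun n => lineFourierCoeff f y n * cexp (I * n * x)) (f (x + y * I)) := by
  have : Fact (0 < 2 * π) := ⟨two_pi_pos⟩
  have hline : Function.Periodic (fun t : ℝ => f (t + y * I)) (2 * π) := fun t => by
    simpa [add_right_comm] using hper (t + y * I)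
  have hcoeff : fourierCoeff hline.lift = lineFourierCoeff f y := funext fun n => by
    simp only [fourierCoeff_eq_intervalIntegral _ n 0, zero_add, lineFourierCoeff,
      Function.Periodic.lift_coe, fourier_coe_two_pi, Int.cast_neg, mul_neg, neg_mul, smul_eq_mul,
      real_smul, one_div, ofReal_inv, ofReal_mul, ofReal_ofNat]
  simpa only [hcoeff, fourier_coe_two_pi] using
    hline.hasSum_fourierCoeff_lift (hf.comp (by fun_prop)) (hcoeff ▸ hsum) x

theorem lineFourierCoeff_zero_eq_exp_mul (hf : Differentiable ℂ f) (hper : Function.Periodic f (2 * π))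
    (y : ℝ) (n : ℤ) : lineFourierCoeff f 0 n = cexp (n * y) * lineFourierCoeff f y n := by
  set h : ℂ → ℂ := fun w => cexp (-(I * n * w)) * f w
  have hh : Differentiable ℂ h := by fun_prop
  have hh_per : Function.Periodic h (2 * π : ℝ) := fun w => by
    have hexp : -(I * n * (w + (2 * π : ℝ))) = -(I * n * w) + (-n : ℤ) * (2 * π * I) := by
      push_cast; ring
    simp only [h]
    rw [hexp, Complex.exp_add, exp_int_mul_two_pi_mul_I, mul_one, ofReal_mul, ofReal_ofNat, hper w]
  have hshift : ∀ x : ℝ, h (x + y * I) = cexp (n * y) * (cexp (-(I * n * x)) * f (x + y * I)) :=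
    fun x => by
      simp only [h, ← mul_assoc, ← Complex.exp_add]
      congr 2
      linear_combination -(n * y : ℂ) * I_sq
  have hcontour := hh_per.intervalIntegral_add_mul_I_eq hh y
  simp only [hshift, intervalIntegral.integral_const_mul] at hcontour
  simp only [lineFourierCoeff, ofReal_zero, zero_mul, add_zero]
  rw [← hcontour]
  ring

theorem norm_lineFourierCoeff_le {y M : ℝ} (hM : ∀ x ∈ Set.Icc 0 (2 * π), ‖f (x + y * I)‖ ≤ M)
    (n : ℤ) : ‖lineFourierCoeff f y n‖ ≤ M := by
  have hint : ‖∫ x in (0:ℝ)..2 * π, cexp (-(I * n * x)) * f (x + y * I)‖ ≤ M * |2 * π - 0| := by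
    refine intervalIntegral.norm_integral_le_of_norm_le_const fun x hx => ?_
    rw [Set.uIoc_of_le two_pi_pos.le] at hx
    simpa [norm_exp] using hM x (Set.Ioc_subset_Icc_self hx)
  rw [sub_zero, abs_of_pos two_pi_pos] at hint
  rw [lineFourierCoeff, norm_mul, norm_real, norm_inv, Real.norm_of_nonneg two_pi_pos.le]
  calc (2 * π)⁻¹ * ‖∫ x in (0:ℝ)..2 * π, cexp (-(I * n * x)) * f (x + y * I)‖
      ≤ (2 * π)⁻¹ * (M * (2 * π)) := by gcongr
    _ = M := by field_simp

theorem exists_norm_lineFourierCoeff_le (hf : Differentiable ℂ f)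
    (hper : Function.Periodic f (2 * π)) (R : ℝ) :
    ∃ C, ∀ n : ℤ, ‖lineFourierCoeff f 0 n‖ ≤ C * rexp (-(|(n : ℝ)| * R)) := by
  have hbounded (y : ℝ) : ∃ M, ∀ n, ‖lineFourierCoeff f y n‖ ≤ M := by
    obtain ⟨M, hM⟩ := isCompact_Icc.exists_bound_of_continuousOn
      (hf.continuous.comp (by fun_prop : Continuous fun x : ℝ => (x + y * I : ℂ))).continuousOn
    exact ⟨M, norm_lineFourierCoeff_le hM⟩
  obtain ⟨Mpos, hMpos⟩ := hbounded R
  obtain ⟨Mneg, hMneg⟩ := hbounded (-R)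
  have hshift (y : ℝ) (n : ℤ) :
      ‖lineFourierCoeff f 0 n‖ = rexp (n * y) * ‖lineFourierCoeff f y n‖ := by
    rw [lineFourierCoeff_zero_eq_exp_mul hf hper y n, norm_mul, ← ofReal_intCast, ← ofReal_mul,
      norm_exp_ofReal]
  refine ⟨max Mpos Mneg, fun n => ?_⟩
  rcases le_or_gt 0 n with hn | hn
  · rw [hshift (-R), abs_of_nonneg (by exact_mod_cast hn : (0 : ℝ) ≤ n), mul_neg, mul_comm]
    exact mul_le_mul_of_nonneg_right ((hMneg n).trans (le_max_right _ _)) (exp_pos _).le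
  · rw [hshift R, abs_of_neg (by exact_mod_cast hn : (n : ℝ) < 0), neg_mul, neg_neg, mul_comm]
    exact mul_le_mul_of_nonneg_right ((hMpos n).trans (le_max_left _ _)) (exp_pos _).le

theorem exists_norm_lineFourierCoeff_mul_exp_le (hf : Differentiable ℂ f)
    (hper : Function.Periodic f (2 * π)) (R : ℝ) :
    ∃ C, ∀ n : ℤ, ∀ z : ℂ, |z.im| ≤ R →
      ‖lineFourierCoeff f 0 n * cexp (I * n * z)‖ ≤ C * rexp (-|(n : ℝ)|) := by
  obtain ⟨C, hC⟩ := exists_norm_lineFourierCoeff_le hf hper (R + 1)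
  refine ⟨C, fun n z hz => ?_⟩
  have hexp : ‖cexp (I * n * z)‖ ≤ rexp (|(n : ℝ)| * R) := by
    rw [norm_exp, exp_le_exp]
    have : (I * n * z).re = -(n * z.im) := by simp
    rw [this]
    calc -(n * z.im) ≤ |(n : ℝ)| * |z.im| := by rw [← abs_mul]; exact neg_le_abs _
      _ ≤ |(n : ℝ)| * R := by gcongr
  calc ‖lineFourierCoeff f 0 n * cexp (I * n * z)‖
      ≤ C * rexp (-(|(n : ℝ)| * (R + 1))) * rexp (|(n : ℝ)| * R) := by
        rw [norm_mul]
        exact mul_le_mul (hC n) hexp (norm_nonneg _) ((norm_nonneg _).trans (hC n))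
    _ = C * rexp (-|(n : ℝ)|) := by rw [mul_assoc, ← Real.exp_add]; ring_nf

theorem lineFourierCoeff_zero_mul_exp (hf : Differentiable ℂ f)
    (hper : Function.Periodic f (2 * π)) (n : ℤ) (z : ℂ) :
    lineFourierCoeff f 0 n * cexp (I * n * z) = lineFourierCoeff f z.im n * cexp (I * n * z.re) := by
  rw [lineFourierCoeff_zero_eq_exp_mul hf hper z.im n, mul_comm (cexp _), mul_assoc, ← Complex.exp_add]
  congr 2
  linear_combination -(I * n) * re_add_im z + (n * z.im : ℂ) * I_sq

theorem hasSum_lineFourierCoeff_zero_mul_exp (hf : Differentiable ℂ f)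
    (hper : Function.Periodic f (2 * π)) (z : ℂ) :
    HasSum (fun n => lineFourierCoeff f 0 n * cexp (I * n * z)) (f z) := by
  have hsummable (w : ℂ) : Summable fun n => lineFourierCoeff f 0 n * cexp (I * n * w) := by
    obtain ⟨C, hC⟩ := exists_norm_lineFourierCoeff_mul_exp_le hf hper |w.im|
    exact (Real.summable_exp_neg_abs_int.mul_left C).of_norm_bounded fun n => hC n w le_rfl
  have hline_summable : Summable (lineFourierCoeff f z.im) := by
    simpa [lineFourierCoeff_zero_mul_exp hf hper] using hsummable (z.im * I)
  simpa [lineFourierCoeff_zero_mul_exp hf hper, re_add_im] using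
    hasSum_lineFourierCoeff hf.continuous hper hline_summable z.re

theorem tendstoUniformlyOn_sum_lineFourierCoeff_mul_exp (hf : Differentiable ℂ f)
    (hper : Function.Periodic f (2 * π)) (R : ℝ) :
    TendstoUniformlyOn
      (fun (s : Finset ℤ) (z : ℂ) => ∑ n ∈ s, lineFourierCoeff f 0 n * cexp (I * n * z))
      f atTop {z | |z.im| ≤ R} := by
  obtain ⟨C, hC⟩ := exists_norm_lineFourierCoeff_mul_exp_le hf hper R
  exact (tendstoUniformlyOn_tsum (Real.summable_exp_neg_abs_int.mul_left C) hC).congr_right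
    fun z _ => (hasSum_lineFourierCoeff_zero_mul_exp hf hper z).tsum_eq

end

theorem periodic_entire_fourier_expansion_general (f : ℂ → ℂ)
    (hf_hol : Differentiable ℂ f)
    (hf_per : ∀ z, f (z + 2 * π) = f z) :
    ∃ c : ℤ → ℂ, TendstoLocallyUniformly
      (fun (s : Finset ℤ) (z : ℂ) => ∑ n ∈ s, c n * Complex.exp (Complex.I * n * z))
      f atTop := by
  refine ⟨lineFourierCoeff f 0, tendstoLocallyUniformly_of_forall_exists_nhds fun z => ?_⟩
  have hstrip_mem : {w : ℂ | |w.im| ≤ |z.im| + 1} ∈ nhds z :=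
    (continuous_abs.comp continuous_im).continuousAt.preimage_mem_nhds
      (Iic_mem_nhds (lt_add_one _))
  exact ⟨_, hstrip_mem, tendstoUniformlyOn_sum_lineFourierCoeff_mul_exp hf_hol hf_per _⟩

/-- Every entire function `f : ℂ → ℂ` that is `2π`-periodic in
the real direction (`f (z + 2π) = f z`) and square integrable against
`e^{-|z|²} dz` admits an expansion `f z = ∑_{n∈ℤ} c_n e^{inz}` whose partial
sums (over finite sets of indices) converge to `f` locally uniformly on `ℂ`. -/
theorem periodic_entire_fourier_expansion (f : ℂ → ℂ)
    (hf_hol : Differentiable ℂ f)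
    (hf_per : ∀ z, f (z + 2 * π) = f z)
    (hf_L2 : Integrable (fun z : ℂ => ‖f z‖ ^ 2 * Real.exp (-‖z‖ ^ 2))) :
    ∃ c : ℤ → ℂ, TendstoLocallyUniformly
      (fun (s : Finset ℤ) (z : ℂ) => ∑ n ∈ s, c n * Complex.exp (Complex.I * n * z))
      f atTop :=
  periodic_entire_fourier_expansion_general f hf_hol hf_per
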